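/- arXiv:2312.16618 — 2 statements merged into one kernel-verified Lean document; each statement's English description precedes it below -/
import Mathlib

section
/- Let G be a cofinitary group and (s,E) a condition of Zhang's forcing Z_G. Then: (1) if n ∉ dom(s), then for all but finitely many m ∈ ℕ the pair (s ∪ {(n,m)}, E) is a condition of Z_G extending (s,E); (2) if m ∉ ran(s), then for all but finitely many n ∈ ℕ the pair (s ∪ {(n,m)}, E) is a condition of Z_G extending (s,E). -/
noncomputable section

/-- Permutations of the natural numbers (elements of `S_∞`). -/
abbrev Perm' := Equiv.Perm ℕ

/-- A letter of a word over `G ∪ {x, x⁻¹}`: either a group element (of `S_∞`),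
or `Sum.inr true` standing for `x`, or `Sum.inr false` standing for `x⁻¹`. -/
abbrev Letter := Perm' ⊕ Bool

/-- A word is a list of letters, written left to right
(the leftmost letter is applied last). -/
abbrev Word := List Letter

/-- A subgroup of `S_∞` is cofinitary if every non-identity element
has only finitely many fixed points. -/
def Cofinitary (G : Subgroup Perm') : Prop :=
  ∀ g ∈ G, g ≠ 1 → {n : ℕ | g n = n}.Finite

/-- A set of pairs is a partial injection (functional and injective). -/
def PartInj (s : Set (ℕ × ℕ)) : Prop :=
  (∀ ⦃a b c⦄, (a, b) ∈ s → (a, c) ∈ s → b = c) ∧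
  (∀ ⦃a b c⦄, (a, c) ∈ s → (b, c) ∈ s → a = b)

/-- Domain of a partial injection given as a set of pairs. -/
def pdom (s : Set (ℕ × ℕ)) : Set ℕ := Prod.fst '' s

/-- Range of a partial injection given as a set of pairs. -/
def pran (s : Set (ℕ × ℕ)) : Set ℕ := Prod.snd '' s

/-- The relation given by substituting the partial injection `s` for `x`
(and `s⁻¹` for `x⁻¹`) in a single letter. -/
def letterRel (s : Set (ℕ × ℕ)) : Letter → ℕ → ℕ → Prop
  | Sum.inl g => fun a b => g a = b
  | Sum.inr true => fun a b => (a, b) ∈ s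
  | Sum.inr false => fun a b => (b, a) ∈ s

/-- The relation `w[s]`: evaluation of a word at the partial injection `s`,
composing the letter relations (rightmost letter applied first). -/
def wordRel (s : Set (ℕ × ℕ)) : Word → ℕ → ℕ → Prop
  | [] => fun a b => a = b
  | l :: w => fun a b => ∃ c, wordRel s w a c ∧ letterRel s l c b

/-- `fix(w[s])`, the set of fixed points of the partial injection `w[s]`. -/
def wordFix (s : Set (ℕ × ℕ)) (w : Word) : Set ℕ := {n | wordRel s w n n}

/-- The word `x^k` for an integer `k` (for `k < 0`, `|k|` copies of `x⁻¹`). -/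
def xpow (k : ℤ) : Word :=
  if 0 ≤ k then List.replicate k.toNat (Sum.inr true : Letter)
  else List.replicate (-k).toNat (Sum.inr false : Letter)

/-- The block `g x^k` as a word. -/
def blockWord (p : Perm' × ℤ) : Word := Sum.inl p.1 :: xpow p.2

/-- `w` is a nice word (member of `W*_G`): `w = x^{k₀}` with `k₀ > 0`, or
`w = g_l x^{k_l} ⋯ g₁ x^{k₁} g₀ x^{k₀}` with `k₀ > 0`, all `k_i ≠ 0` and all
`g_i ∈ G \ {id}`. -/
def IsNice (G : Subgroup Perm') (w : Word) : Prop :=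
  (∃ k : ℕ, 0 < k ∧ w = xpow (k : ℤ)) ∨
  (∃ bs : List (Perm' × ℤ), bs ≠ [] ∧
    (∀ p ∈ bs, p.1 ∈ G ∧ p.1 ≠ 1 ∧ p.2 ≠ 0) ∧
    (∃ p, bs.getLast? = some p ∧ 0 < p.2) ∧
    w = (bs.map blockWord).flatten)

/-- The number of occurrences of `x` or `x⁻¹` in a word. -/
def xOccurrences (w : Word) : ℕ := w.countP (fun l => l.isRight)

/-- `w ∈ W¹_G`: a nice word with exactly one occurrence of `x` or `x⁻¹`. -/
def IsNiceOne (G : Subgroup Perm') (w : Word) : Prop :=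
  IsNice G w ∧ xOccurrences w = 1

/-- `(s, E)` is a condition of Zhang's forcing `Z_G`: `s` is a finite partial
injection and `E` a finite set of nice words. -/
def ZCond (G : Subgroup Perm') (s : Set (ℕ × ℕ)) (E : Set Word) : Prop :=
  s.Finite ∧ PartInj s ∧ E.Finite ∧ ∀ w ∈ E, IsNice G w

/-- `(t, F) ≤ (s, E)` in Zhang's forcing: `s ⊆ t`, `E ⊆ F`, and
`fix(w[t]) = fix(w[s])` for every `w ∈ E`. -/
def ZLe (t : Set (ℕ × ℕ)) (F : Set Word) (s : Set (ℕ × ℕ)) (E : Set Word) : Prop :=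
  s ⊆ t ∧ E ⊆ F ∧ ∀ w ∈ E, wordFix t w = wordFix s w

/-- An injective tree: a nonempty set of finite sequences closed under initial
segments, all of whose elements are injective sequences. -/
def IsInjTree (T : Set (List ℕ)) : Prop :=
  T.Nonempty ∧ (∀ t ∈ T, ∀ s : List ℕ, s <+: t → s ∈ T) ∧ ∀ t ∈ T, t.Nodup

/-- `T ∈ I_i(P)⁺`: an injective tree such that for every `s ∈ T` and every
finite `P₀ ⊆ P` there are `t ∈ T` extending `s` and `k ∈ dom(t) \ dom(s)` with
`t(k) ≠ f(k)` for all `f ∈ P₀`. -/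
def TreePos (P : Set Perm') (T : Set (List ℕ)) : Prop :=
  IsInjTree T ∧
  ∀ s ∈ T, ∀ P₀ ⊆ P, P₀.Finite →
    ∃ t ∈ T, s <+: t ∧ ∃ k, s.length ≤ k ∧ k < t.length ∧
      ∀ f ∈ P₀, t.getD k 0 ≠ f k

/-- A set `O` is closed under a relation `R` and its inverse. -/
def RelClosed (R : ℕ → ℕ → Prop) (O : Set ℕ) : Prop :=
  ∀ a b, R a b → (a ∈ O ↔ b ∈ O)

/-- The orbit of `n` under the (partial injective) relation `R`: the smallest
set containing `n` closed under applications of `R` and `R⁻¹`. -/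
def relOrbit (R : ℕ → ℕ → Prop) (n : ℕ) : Set ℕ :=
  ⋂₀ {O : Set ℕ | n ∈ O ∧ RelClosed R O}

/-- The set of all orbits of the relation `R`. -/
def relOrbits (R : ℕ → ℕ → Prop) : Set (Set ℕ) := {O | ∃ n, O = relOrbit R n}

/-- Domain of a relation. -/
def relDom (R : ℕ → ℕ → Prop) : Set ℕ := {a | ∃ b, R a b}

/-- Range of a relation. -/
def relRan (R : ℕ → ℕ → Prop) : Set ℕ := {b | ∃ a, R a b}

/-- The set of closed orbits of `R`: those orbits contained in `dom ∩ ran`. -/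
def relClosedOrbits (R : ℕ → ℕ → Prop) : Set (Set ℕ) :=
  {O ∈ relOrbits R | O ⊆ relDom R ∩ relRan R}

/-- The relation of a partial injection given as a set of pairs. -/
def sRel (s : Set (ℕ × ℕ)) : ℕ → ℕ → Prop := fun a b => (a, b) ∈ s

/-- The relation (graph) of a permutation of `ℕ`. -/
def permRel (f : Perm') : ℕ → ℕ → Prop := fun a b => f a = b

/-- A partial injection `s` is nice: every closed orbit has its minimum below
the minimum of the complement of the union of all closed orbits. -/
def NiceInj (s : Set (ℕ × ℕ)) : Prop :=
  ∀ O ∈ relClosedOrbits (sRel s),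
    sInf O < sInf {n : ℕ | n ∉ ⋃₀ relClosedOrbits (sRel s)}

/-- The position of a closed orbit `O` of `s` in the well-order of closed
orbits by their minima. -/
def orbitIndex (s : Set (ℕ × ℕ)) (O : Set ℕ) : ℕ :=
  {P ∈ relClosedOrbits (sRel s) | sInf P < sInf O}.ncard

/-- `s` codes `r`, i.e. `o_s ⊆ r`: the `n`-th closed orbit (in the well-order
by minima) has cardinality congruent to `r(n)` mod 2. -/
def CodesReal (s : Set (ℕ × ℕ)) (r : ℕ → Fin 2) : Prop :=
  ∀ O ∈ relClosedOrbits (sRel s), O.ncard % 2 = (r (orbitIndex s O) : ℕ)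

/-- `(s, E)` is a condition of `Z_G(r)`. -/
def ZrCond (G : Subgroup Perm') (r : ℕ → Fin 2)
    (s : Set (ℕ × ℕ)) (E : Set Word) : Prop :=
  ZCond G s E ∧ NiceInj s ∧ CodesReal s r

/-- The `n`-th prime. -/
def pPrime (n : ℕ) : ℕ := Nat.nth Nat.Prime n

/-- The orbit-coding function `o†`: `o†(n)` is the number of closed orbits of
`R` of cardinality `p_n`, modulo 2. -/
def odag (R : ℕ → ℕ → Prop) (n : ℕ) : ℕ :=
  {O ∈ relClosedOrbits R | O.ncard = pPrime n}.ncard % 2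

/-- `v^k`: the word `v` concatenated `k` times. -/
def wpow (v : Word) (k : ℕ) : Word := (List.replicate k v).flatten

/-- `w ∈ W†_G`: a nice word that is indecomposable, i.e. not of the form `v^k`
for a nice word `v` and `k > 1`. -/
def Indecomposable (G : Subgroup Perm') (w : Word) : Prop :=
  IsNice G w ∧ ¬∃ v : Word, IsNice G v ∧ ∃ k : ℕ, 1 < k ∧ w = wpow v k

/-- The inverse of a letter. -/
def letterInv : Letter → Letter
  | Sum.inl g => Sum.inl g⁻¹
  | Sum.inr b => Sum.inr (!b)

/-- The inverse of a word. -/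
def wordInv (w : Word) : Word := (w.map letterInv).reverse

/-- `E` is closed under cyclic permutations and inverses thereof within `W*_G`. -/
def CyclClosed (G : Subgroup Perm') (E : Set Word) : Prop :=
  ∀ w ∈ E, ∀ w₀ w₁ : Word, w = w₀ ++ w₁ →
    (IsNice G (w₁ ++ w₀) → w₁ ++ w₀ ∈ E) ∧
    (IsNice G (wordInv (w₁ ++ w₀)) → wordInv (w₁ ++ w₀) ∈ E)

/-- `(s, E)` is a condition of `Z†_G(r)`: a Zhang condition such that `E` is
closed under cyclic permutations and inverses thereof in `W*_G`, and whenever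
`w = v^k ∈ E` with `v ∈ W†_G` then `v^l ∈ E` for all `0 < l ≤ k` and `o†_{v[s]}`
codes `r` up to `n` for every `n` with `p_n ≤ k`. -/
def ZdagCond (G : Subgroup Perm') (r : ℕ → Fin 2)
    (s : Set (ℕ × ℕ)) (E : Set Word) : Prop :=
  ZCond G s E ∧ CyclClosed G E ∧
  ∀ w ∈ E, ∀ v : Word, ∀ k : ℕ, Indecomposable G v → w = wpow v k →
    (∀ l : ℕ, 0 < l → l ≤ k → wpow v l ∈ E) ∧
    (∀ n : ℕ, pPrime n ≤ k → ∀ i ≤ n, odag (wordRel s v) i = (r i : ℕ))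

/-- Substituting the permutation `f` for `x` in a letter. -/
def letterPerm (f : Perm') : Letter → Perm'
  | Sum.inl g => g
  | Sum.inr true => f
  | Sum.inr false => f⁻¹

/-- `w[f]`: evaluation of a word at the permutation `f`. -/
def wordPerm (f : Perm') (w : Word) : Perm' := (w.map (letterPerm f)).prod

/-- Two functions are eventually different. -/
def EvDiff (f g : ℕ → ℕ) : Prop := {k : ℕ | f k = g k}.Finite

/-- A set of permutations is an eventually different family. -/
def EDFamily (P : Set Perm') : Prop :=
  ∀ f ∈ P, ∀ g ∈ P, f ≠ g → EvDiff f g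

/-! Write `t = s ∪ {(n, m)}` and let `p` be the new point (`m` in (1), `n` in (2)). Let `Γ` be the
finite set of group elements occurring in `E`. For all but finitely many `p` (this is where
cofinitarity enters), `p` is a leaf of the graph of `t` and every `g^{±1} p` with `g ∈ Γ` lies
outside `dom t ∪ ran t`. A nice word is cyclically reduced: `x` never stands next to `x⁻¹` and no
two group letters are adjacent, also across the ends. A walk through `t` following such a word
cannot pass through `p`: entering and leaving along the new edge would put `x` next to `x⁻¹`,
since `p` is a leaf, and a group letter next to `p` leads to or comes from an isolated point,
where the walk is stuck. So the closed walks witnessing fixed points of `w[t]` never visit `p`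
and are walks in `s`. -/

def LetterAdj : Letter → Letter → Prop
  | Sum.inr b, Sum.inr b' => b = b'
  | Sum.inl _, Sum.inl _ => False
  | _, _ => True

def psupp (s : Set (ℕ × ℕ)) : Set ℕ := pdom s ∪ pran s

def groupLetters (w : Word) : Set Perm' := {g | Sum.inl g ∈ w}

lemma groupLetters_mono {v w : Word} (h : v ⊆ w) : groupLetters v ⊆ groupLetters w :=
  fun _ hg => h hg

lemma mem_pdom_of_mem {s : Set (ℕ × ℕ)} {a b : ℕ} (h : (a, b) ∈ s) : a ∈ pdom s :=
  ⟨(a, b), h, rfl⟩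

lemma mem_pran_of_mem {s : Set (ℕ × ℕ)} {a b : ℕ} (h : (a, b) ∈ s) : b ∈ pran s :=
  ⟨(a, b), h, rfl⟩

@[simp] lemma wordRel_nil {s : Set (ℕ × ℕ)} {a b : ℕ} : wordRel s [] a b ↔ a = b := Iff.rfl

@[simp] lemma wordRel_cons {s : Set (ℕ × ℕ)} {l : Letter} {w : Word} {a b : ℕ} :
    wordRel s (l :: w) a b ↔ ∃ c, wordRel s w a c ∧ letterRel s l c b := Iff.rfl

@[simp] lemma letterRel_inl {s : Set (ℕ × ℕ)} {g : Perm'} {a b : ℕ} :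
    letterRel s (Sum.inl g) a b ↔ g a = b := Iff.rfl

@[simp] lemma letterRel_true {s : Set (ℕ × ℕ)} {a b : ℕ} :
    letterRel s (Sum.inr true) a b ↔ (a, b) ∈ s := Iff.rfl

@[simp] lemma letterRel_false {s : Set (ℕ × ℕ)} {a b : ℕ} :
    letterRel s (Sum.inr false) a b ↔ (b, a) ∈ s := Iff.rfl

lemma wordRel_append {s : Set (ℕ × ℕ)} {u v : Word} {a b : ℕ} :
    wordRel s (u ++ v) a b ↔ ∃ c, wordRel s v a c ∧ wordRel s u c b := by
  induction u generalizing b with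
  | nil => simp
  | cons l u ih =>
    simp only [List.cons_append, wordRel_cons, ih]
    constructor
    · rintro ⟨d, ⟨c, hc, hd⟩, hl⟩
      exact ⟨c, hc, d, hd, hl⟩
    · rintro ⟨c, hc, d, hd, hl⟩
      exact ⟨d, ⟨c, hc, hd⟩, hl⟩

lemma wordRel_mono {s t : Set (ℕ × ℕ)} (hst : s ⊆ t) {w : Word} {a b : ℕ}
    (h : wordRel s w a b) : wordRel t w a b := by
  induction w generalizing b with
  | nil => exact h
  | cons l w ih =>
    obtain ⟨c, hc, hl⟩ := h
    refine ⟨c, ih hc, ?_⟩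
    rcases l with g | _ | _
    exacts [hl, hst hl, hst hl]

section Walks

variable {s t : Set (ℕ × ℕ)} {Γ : Set Perm'} {p : ℕ}

lemma mem_psupp_of_letterRel_of_letterRel {l₁ l₂ : Letter} {a b c : ℕ}
    (hadj : LetterAdj l₂ l₁) (h₁ : letterRel t l₁ a c) (h₂ : letterRel t l₂ c b) :
    c ∈ psupp t := by
  rcases l₁ with g | _ | _ <;> rcases l₂ with g' | _ | _
  all_goals first
    | exact absurd hadj id
    | exact Or.inl (mem_pdom_of_mem ‹_›)
    | exact Or.inr (mem_pran_of_mem ‹_›)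

lemma mem_psupp_of_wordRel {l : Letter} {w : Word} {a b c : ℕ}
    (hw : List.IsChain LetterAdj (l :: w)) (ha : a ∈ psupp t) (h : wordRel t w a c)
    (hl : letterRel t l c b) : c ∈ psupp t := by
  cases w with
  | nil => exact (wordRel_nil.1 h) ▸ ha
  | cons l' w =>
    obtain ⟨d, -, hl'⟩ := h
    exact mem_psupp_of_letterRel_of_letterRel (List.isChain_cons_cons.1 hw).1 hl' hl

lemma letterRel_of_letterRel_of_ne (hoff : ∀ a b, (a, b) ∈ t → a ≠ p → b ≠ p → (a, b) ∈ s)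
    {l : Letter} {a b : ℕ} (h : letterRel t l a b) (ha : a ≠ p) (hb : b ≠ p) :
    letterRel s l a b := by
  rcases l with g | _ | _
  exacts [h, hoff _ _ h hb ha, hoff _ _ h ha hb]

variable (hleaf : p ∈ pdom t → p ∉ pran t) (hiso : ∀ g ∈ Γ, g p ∉ psupp t ∧ g⁻¹ p ∉ psupp t)
include hleaf hiso

lemma not_mem_psupp_or_of_letterRel_of_letterRel {l₁ l₂ : Letter} {a b : ℕ}
    (hΓ : groupLetters [l₂, l₁] ⊆ Γ) (hadj : LetterAdj l₂ l₁)
    (h₁ : letterRel t l₁ a p) (h₂ : letterRel t l₂ p b) : a ∉ psupp t ∨ b ∉ psupp t := by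
  rcases l₁ with g | β₁
  · left
    obtain rfl : g⁻¹ p = a := Equiv.Perm.inv_eq_iff_eq.2 h₁.symm
    exact (hiso g (hΓ (by simp [groupLetters]))).2
  rcases l₂ with g | β₂
  · right
    obtain rfl : g p = b := h₂
    exact (hiso g (hΓ (by simp [groupLetters]))).1
  obtain rfl : β₂ = β₁ := hadj
  cases β₂
  · exact absurd (mem_pran_of_mem h₂) (hleaf (mem_pdom_of_mem h₁))
  · exact absurd (mem_pran_of_mem h₁) (hleaf (mem_pdom_of_mem h₂))

lemma wordRel_of_wordRel_of_ne (hoff : ∀ a b, (a, b) ∈ t → a ≠ p → b ≠ p → (a, b) ∈ s)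
    {w : Word} {a b : ℕ} (hw : List.IsChain LetterAdj w) (hΓ : groupLetters w ⊆ Γ)
    (h : wordRel t w a b) (ha : a ∈ psupp t) (hap : a ≠ p) (hb : b ∈ psupp t) (hbp : b ≠ p) :
    wordRel s w a b := by
  induction w generalizing b with
  | nil => exact h
  | cons l w ih =>
    obtain ⟨c, hc, hl⟩ := h
    have hcs : c ∈ psupp t := mem_psupp_of_wordRel hw ha hc hl
    have hcp : c ≠ p := by
      rintro rfl
      cases w with
      | nil => exact hap hc
      | cons l' w =>
        obtain ⟨d, hd, hl'⟩ := hc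
        have hds : d ∈ psupp t := mem_psupp_of_wordRel hw.tail ha hd hl'
        rcases not_mem_psupp_or_of_letterRel_of_letterRel hleaf hiso
          ((groupLetters_mono (by simp)).trans hΓ) (List.isChain_cons_cons.1 hw).1 hl' hl with h | h
        exacts [h hds, h hb]
    exact ⟨c, ih hw.tail ((groupLetters_mono (by simp)).trans hΓ) hc hcs hcp,
      letterRel_of_letterRel_of_ne hoff hl hcp hbp⟩

lemma not_mem_wordFix_append_true {u : Word} (hu : List.IsChain LetterAdj (Sum.inr true :: u))
    (hΓ : groupLetters (Sum.inr true :: u) ⊆ Γ) : p ∉ wordFix t (u ++ [Sum.inr true]) := by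
  intro h
  obtain ⟨c, hpc, hcp⟩ := wordRel_append.1 h
  have hpc : (p, c) ∈ t := by simpa using hpc
  cases u with
  | nil => exact hleaf (mem_pdom_of_mem hpc) (wordRel_nil.1 hcp ▸ mem_pran_of_mem hpc)
  | cons l u =>
    obtain ⟨d, hd, hl⟩ := hcp
    have hcs : c ∈ psupp t := Or.inr (mem_pran_of_mem hpc)
    have hds : d ∈ psupp t := mem_psupp_of_wordRel hu.tail hcs hd hl
    rcases not_mem_psupp_or_of_letterRel_of_letterRel (l₂ := Sum.inr true) hleaf hiso
      ((groupLetters_mono (by simp)).trans hΓ) (List.isChain_cons_cons.1 hu).1 hl hpc with h | h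
    exacts [h hds, h hcs]

theorem wordFix_eq_of_leaf (hst : s ⊆ t)
    (hoff : ∀ a b, (a, b) ∈ t → a ≠ p → b ≠ p → (a, b) ∈ s) {w : Word}
    (hw : List.IsChain LetterAdj (Sum.inr true :: w)) (hlast : w.getLast? = some (Sum.inr true))
    (hΓ : groupLetters w ⊆ Γ) : wordFix t w = wordFix s w := by
  obtain ⟨u, rfl⟩ := List.getLast?_eq_some_iff.1 hlast
  refine Set.Subset.antisymm (fun a ha => ?_) fun a ha => wordRel_mono (s := s) hst ha
  obtain ⟨c, hac, -⟩ := wordRel_append.1 ha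
  have has : a ∈ psupp t := Or.inl (mem_pdom_of_mem (by simpa using hac))
  have hap : a ≠ p := by
    rintro rfl
    exact not_mem_wordFix_append_true hleaf hiso (hw.infix (List.prefix_append _ _).isInfix)
      ((groupLetters_mono (by simp)).trans hΓ) ha
  exact wordRel_of_wordRel_of_ne hleaf hiso hoff hw.tail hΓ ha has hap has hap

end Walks

lemma exists_xpow_eq_replicate (k : ℤ) :
    ∃ j β, xpow k = List.replicate j (Sum.inr β) ∧ (k ≠ 0 → 0 < j) := by
  unfold xpow
  split_ifs
  · exact ⟨k.toNat, true, rfl, by omega⟩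
  · exact ⟨(-k).toNat, false, rfl, by omega⟩

lemma inl_not_mem_xpow (g : Perm') (k : ℤ) : Sum.inl g ∉ xpow k := by
  obtain ⟨j, β, hx, -⟩ := exists_xpow_eq_replicate k
  simp [hx, List.mem_replicate]

lemma isChain_cons_replicate_append {β : Bool} {r : Word}
    (h : List.IsChain LetterAdj (Sum.inr β :: r)) (j : ℕ) :
    List.IsChain LetterAdj (Sum.inr β :: (List.replicate j (Sum.inr β) ++ r)) := by
  induction j with
  | zero => exact h
  | succ j ih =>
    rw [List.replicate_succ, List.cons_append]
    exact List.isChain_cons_cons.2 ⟨rfl, ih⟩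

lemma isChain_cons_flatten_blockWord {bs : List (Perm' × ℤ)} (hbs : ∀ q ∈ bs, q.2 ≠ 0)
    (β : Bool) : List.IsChain LetterAdj (Sum.inr β :: (bs.map blockWord).flatten) := by
  induction bs generalizing β with
  | nil => exact List.isChain_singleton _
  | cons q bs ih =>
    obtain ⟨j, β', hx, hj⟩ := exists_xpow_eq_replicate q.2
    obtain ⟨j, rfl⟩ := Nat.exists_eq_add_one_of_ne_zero (hj (hbs q (by simp))).ne'
    rw [List.map_cons, List.flatten_cons, blockWord, hx, List.replicate_succ, List.cons_append,
      List.cons_append]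
    refine List.isChain_cons_cons.2 ⟨trivial, List.isChain_cons_cons.2 ⟨trivial, ?_⟩⟩
    exact isChain_cons_replicate_append (ih (fun q hq => hbs q (by simp [hq])) β') j

namespace IsNice

variable {G : Subgroup Perm'} {w : Word}

/-- Together with `getLast?_eq`: nice words are cyclically reduced. -/
theorem isChain_cons (hw : IsNice G w) : List.IsChain LetterAdj (Sum.inr true :: w) := by
  rcases hw with ⟨k, -, rfl⟩ | ⟨bs, -, hbs, -, rfl⟩
  · simpa [xpow] using isChain_cons_replicate_append (List.isChain_singleton _) k
  · exact isChain_cons_flatten_blockWord (fun q hq => (hbs q hq).2.2) true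

theorem getLast?_eq (hw : IsNice G w) : w.getLast? = some (Sum.inr true) := by
  rcases hw with ⟨k, hk, rfl⟩ | ⟨bs, -, -, ⟨q, hq, hq₀⟩, rfl⟩
  · simp [xpow, List.getLast?_replicate, hk.ne']
  · obtain ⟨bs, rfl⟩ := List.getLast?_eq_some_iff.1 hq
    have : q.2.toNat ≠ 0 := by omega
    simp [blockWord, xpow, hq₀.le, List.getLast?_append, List.getLast?_cons,
      List.getLast?_replicate, this]

theorem groupLetters_subset (hw : IsNice G w) : groupLetters w ⊆ (G : Set Perm') \ {1} := by
  rcases hw with ⟨k, -, rfl⟩ | ⟨bs, -, hbs, -, rfl⟩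
  · exact fun g hg => absurd hg (inl_not_mem_xpow g k)
  · intro g hg
    obtain ⟨b, hb, hgq⟩ := List.mem_flatten.1 hg
    obtain ⟨q, hq, rfl⟩ := List.mem_map.1 hb
    rcases List.mem_cons.1 hgq with h | h
    · obtain rfl := Sum.inl.inj h
      exact ⟨(hbs q hq).1, (hbs q hq).2.1⟩
    · exact absurd h (inl_not_mem_xpow g q.2)

end IsNice

def FreshFor (Γ : Set Perm') (D : Set ℕ) (p : ℕ) : Prop :=
  p ∉ D ∧ ∀ g ∈ Γ, g p ≠ p ∧ g p ∉ D ∧ g⁻¹ p ∉ D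

lemma finite_setOf_not_freshFor {Γ : Set Perm'} {D : Set ℕ} (hΓ : Γ.Finite)
    (hfix : ∀ g ∈ Γ, {k | g k = k}.Finite) (hD : D.Finite) :
    {p | ¬ FreshFor Γ D p}.Finite := by
  refine (hD.union (hΓ.biUnion fun g hg => ((hfix g hg).union
    (hD.preimage g.injective.injOn)).union (hD.preimage g⁻¹.injective.injOn))).subset ?_
  intro p hp
  simp only [Set.mem_ofPred_eq, FreshFor, not_and_or, not_forall, not_not] at hp
  simpa only [Set.mem_union, Set.mem_iUnion, Set.mem_preimage, Set.mem_ofPred_eq, or_assoc,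
    exists_prop] using hp

lemma FreshFor.not_mem_psupp {Γ : Set Perm'} {s : Set (ℕ × ℕ)} {p q : ℕ}
    (hp : FreshFor Γ (insert q (psupp s)) p) : p ∉ pdom s ∧ p ∉ pran s :=
  not_or.1 fun h => hp.1 (Or.inr h)

lemma psupp_insert (a b : ℕ) (s : Set (ℕ × ℕ)) :
    psupp (insert (a, b) s) = insert a (insert b (psupp s)) := by
  ext k
  simp only [psupp, pdom, pran, Set.image_insert_eq, Set.mem_union, Set.mem_insert_iff]
  tauto

lemma Set.Finite.psupp {s : Set (ℕ × ℕ)} (hs : s.Finite) : (psupp s).Finite :=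
  (hs.image _).union (hs.image _)

lemma partInj_insert {s : Set (ℕ × ℕ)} (hs : PartInj s) {n m : ℕ} (hn : n ∉ pdom s)
    (hm : m ∉ pran s) : PartInj (insert (n, m) s) := by
  constructor
  · intro a b c h₁ h₂
    simp only [Set.mem_insert_iff, Prod.mk.injEq] at h₁ h₂
    rcases h₁ with ⟨rfl, rfl⟩ | h₁ <;> rcases h₂ with ⟨h, rfl⟩ | h₂
    · rfl
    · exact absurd (mem_pdom_of_mem h₂) hn
    · exact absurd (h ▸ mem_pdom_of_mem h₁) hn
    · exact hs.1 h₁ h₂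
  · intro a b c h₁ h₂
    simp only [Set.mem_insert_iff, Prod.mk.injEq] at h₁ h₂
    rcases h₁ with ⟨rfl, rfl⟩ | h₁ <;> rcases h₂ with ⟨rfl, h⟩ | h₂
    · rfl
    · exact absurd (mem_pran_of_mem h₂) hm
    · exact absurd (h ▸ mem_pran_of_mem h₁) hm
    · exact hs.2 h₁ h₂

theorem zCond_insert_and_zLe_of_freshFor {G : Subgroup Perm'} {s : Set (ℕ × ℕ)} {E : Set Word}
    (hc : ZCond G s E) {n m p q : ℕ} (hnm : (n, m) = (p, q) ∨ (n, m) = (q, p))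
    (hn : n ∉ pdom s) (hm : m ∉ pran s)
    (hp : FreshFor (⋃ w ∈ E, groupLetters w) (insert q (psupp s)) p) :
    ZCond G (insert (n, m) s) E ∧ ZLe (insert (n, m) s) E s E := by
  obtain ⟨hsfin, hsinj, hEfin, hEnice⟩ := hc
  have hsupp : psupp (insert (n, m) s) = insert p (insert q (psupp s)) := by
    rcases hnm with h | h <;> obtain ⟨rfl, rfl⟩ := Prod.mk.inj h
    exacts [psupp_insert .., (psupp_insert ..).trans (Set.insert_comm ..)]
  have hleaf : p ∈ pdom (insert (n, m) s) → p ∉ pran (insert (n, m) s) := by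
    have hpq : p ≠ q := fun h => hp.1 (Or.inl h)
    have hps := hp.not_mem_psupp
    simp only [pdom, pran, Set.image_insert_eq, Set.mem_insert_iff]
    rcases hnm with h | h <;> obtain ⟨rfl, rfl⟩ := Prod.mk.inj h <;> tauto
  have hiso : ∀ g ∈ ⋃ w ∈ E, groupLetters w,
      g p ∉ psupp (insert (n, m) s) ∧ g⁻¹ p ∉ psupp (insert (n, m) s) := by
    intro g hg
    obtain ⟨hgp, hgD, hg'D⟩ := hp.2 g hg
    rw [hsupp]
    refine ⟨?_, ?_⟩ <;> rintro (h | h)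
    exacts [hgp h, hgD h, hgp (Equiv.Perm.inv_eq_iff_eq.1 h).symm, hg'D h]
  have hoff : ∀ a b, (a, b) ∈ insert (n, m) s → a ≠ p → b ≠ p → (a, b) ∈ s := by
    rintro a b (h | h) ha hb
    · rcases hnm with h' | h' <;> obtain ⟨rfl, rfl⟩ := Prod.mk.inj (h.trans h') <;> tauto
    · exact h
  refine ⟨⟨hsfin.insert _, partInj_insert hsinj hn hm, hEfin, hEnice⟩, Set.subset_insert _ _,
    subset_rfl, fun w hw => ?_⟩
  exact wordFix_eq_of_leaf hleaf hiso (Set.subset_insert _ _) hoff (hEnice w hw).isChain_cons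
    (hEnice w hw).getLast?_eq (Set.subset_biUnion_of_mem hw)

/-- Domain and range extension for Zhang's forcing `Z_G`. -/
theorem statement1 (G : Subgroup Perm') (hG : Cofinitary G)
    (s : Set (ℕ × ℕ)) (E : Set Word) (hc : ZCond G s E) :
    (∀ n : ℕ, n ∉ pdom s →
      {m : ℕ | ¬ (ZCond G (insert (n, m) s) E ∧
        ZLe (insert (n, m) s) E s E)}.Finite) ∧
    (∀ m : ℕ, m ∉ pran s →
      {n : ℕ | ¬ (ZCond G (insert (n, m) s) E ∧
        ZLe (insert (n, m) s) E s E)}.Finite) := by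
  set Γ := ⋃ w ∈ E, groupLetters w
  have hΓ : Γ.Finite :=
    hc.2.2.1.biUnion fun w _ => w.finite_toSet.preimage Sum.inl_injective.injOn
  have hfix : ∀ g ∈ Γ, {k | g k = k}.Finite := by
    intro g hg
    obtain ⟨w, hw, hgw⟩ := Set.mem_iUnion₂.1 hg
    obtain ⟨hgG, hg1⟩ := (hc.2.2.2 w hw).groupLetters_subset hgw
    exact hG g hgG hg1
  have hfresh (q : ℕ) : {p | ¬ FreshFor Γ (insert q (psupp s)) p}.Finite :=
    finite_setOf_not_freshFor hΓ hfix (hc.1.psupp.insert q)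
  refine ⟨fun n hn => (hfresh n).subset fun m => mt fun hm => ?_,
    fun m hm => (hfresh m).subset fun n => mt fun hn => ?_⟩
  · exact zCond_insert_and_zLe_of_freshFor hc (Or.inr rfl) hn hm.not_mem_psupp.2 hm
  · exact zCond_insert_and_zLe_of_freshFor hc (Or.inl rfl) hn.not_mem_psupp.1 hm hn

end
end

section
/- Let G be a cofinitary group, T ∈ I_i(G)^+, t ∈ T, N ∈ ℕ, and (s,E₀) a condition of Zhang's forcing Z_G with E₀ ⊆ W¹_G. Then there is t' ∈ T with t ⊆ t' such that the set of all k ∈ dom(t') \ dom(t) for which (s ∪ {(k, t'(k))}, E₀) is a condition of Z_G extending (s,E₀) has more than N elements. -/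
noncomputable section

/-! A word of `W¹_G` is `x` or `g x`, so `w[s]` is `g ∘ s`, and adding a pair `(k, m)` to `s`
creates a new fixed point of `w[s]` only when `m = g⁻¹ k`. Applying the positivity of `T` to the
finitely many `g⁻¹` over and over yields an extension `t'` with as many positions `k` as we like
at which `t'(k)` avoids all of them; as `t'` is injective, all but `2 |s|` of these positions
also keep `s ∪ {(k, t'(k))}` a partial injection. -/

open Set

lemma xOccurrences_append (v w : Word) :
    xOccurrences (v ++ w) = xOccurrences v + xOccurrences w :=
  List.countP_append ..

lemma xOccurrences_xpow (k : ℤ) : xOccurrences (xpow k) = k.natAbs := by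
  unfold xOccurrences xpow
  split <;> simp [List.countP_replicate] <;> omega

lemma xOccurrences_blockWord (p : Perm' × ℤ) : xOccurrences (blockWord p) = p.2.natAbs := by
  rw [blockWord, ← List.singleton_append, xOccurrences_append, xOccurrences_xpow]
  exact zero_add _

lemma xOccurrences_flatten_map_blockWord (bs : List (Perm' × ℤ)) :
    xOccurrences (bs.map blockWord).flatten = (bs.map fun p => p.2.natAbs).sum := by
  induction bs with
  | nil => rfl
  | cons p bs ih =>
    rw [List.map_cons, List.flatten_cons, xOccurrences_append, xOccurrences_blockWord, ih]
    rfl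

lemma IsNiceOne.eq_x_or_eq_g_x {G : Subgroup Perm'} {w : Word} (h : IsNiceOne G w) :
    w = [Sum.inr true] ∨ ∃ g ∈ G, w = [Sum.inl g, Sum.inr true] := by
  obtain ⟨hnice | ⟨bs, -, hbs, ⟨p, hp, hp0⟩, rfl⟩, hone⟩ := h
  · obtain ⟨k, -, rfl⟩ := hnice
    rw [xOccurrences_xpow] at hone
    obtain rfl : k = 1 := by omega
    exact Or.inl rfl
  · rw [xOccurrences_flatten_map_blockWord] at hone
    match bs, hbs, hp, hone with
    | [q], hbs, hp, hone =>
      obtain rfl : q = p := by simpa using hp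
      obtain hq : q.2 = 1 := by simp at hone; omega
      exact Or.inr ⟨q.1, (hbs q (by simp)).1, by simp [blockWord, hq, xpow]⟩
    | q :: r :: bs, hbs, _, hone =>
      have hq := (hbs q (by simp)).2.2
      have hr := (hbs r (by simp)).2.2
      simp only [List.map_cons, List.sum_cons] at hone
      omega

lemma IsNiceOne.exists_wordRel_iff {G : Subgroup Perm'} {w : Word} (h : IsNiceOne G w) :
    ∃ g ∈ G, ∀ s n m, wordRel s w n m ↔ (n, g m) ∈ s := by
  rcases h.eq_x_or_eq_g_x with rfl | ⟨q, hq, rfl⟩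
  · exact ⟨1, G.one_mem, by simp [wordRel, letterRel]⟩
  · refine ⟨q⁻¹, G.inv_mem hq, fun s n m => ?_⟩
    simp only [wordRel, letterRel, exists_eq_left']
    constructor
    · rintro ⟨c, hc, rfl⟩
      simpa using hc
    · exact fun hm => ⟨_, hm, by simp⟩

lemma PartInj.insert {s : Set (ℕ × ℕ)} {a b : ℕ} (hs : PartInj s) (ha : a ∉ pdom s)
    (hb : b ∉ pran s) : PartInj (insert (a, b) s) := by
  have ha' : ∀ c, (a, c) ∉ s := fun c h => ha ⟨_, h, rfl⟩
  have hb' : ∀ c, (c, b) ∉ s := fun c h => hb ⟨_, h, rfl⟩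
  constructor <;> simp only [mem_insert_iff, Prod.mk.injEq]
  · rintro x y z (⟨rfl, rfl⟩ | hxy) (⟨hx, rfl⟩ | hxz)
    · rfl
    · exact absurd hxz (ha' z)
    · exact absurd (hx ▸ hxy) (ha' y)
    · exact hs.1 hxy hxz
  · rintro x y z (⟨rfl, rfl⟩ | hxz) (⟨rfl, hz⟩ | hyz)
    · rfl
    · exact absurd hyz (hb' y)
    · exact absurd (hz ▸ hxz) (hb' x)
    · exact hs.2 hxz hyz

lemma ZCond.insert {G : Subgroup Perm'} {s : Set (ℕ × ℕ)} {E : Set Word} {a b : ℕ}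
    (hc : ZCond G s E) (ha : a ∉ pdom s) (hb : b ∉ pran s) :
    ZCond G (insert (a, b) s) E :=
  ⟨hc.1.insert _, hc.2.1.insert ha hb, hc.2.2⟩

lemma wordFix_insert_of_wordRel_iff {w : Word} {g : Perm'}
    (hw : ∀ s n m, wordRel s w n m ↔ (n, g m) ∈ s) {s : Set (ℕ × ℕ)} {a b : ℕ} (hab : g a ≠ b) :
    wordFix (insert (a, b) s) w = wordFix s w := by
  ext n
  simp only [wordFix, mem_ofPred_eq, hw, mem_insert_iff, Prod.mk.injEq, or_iff_right_iff_imp]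
  rintro ⟨rfl, rfl⟩
  exact absurd rfl hab

lemma zLe_insert {s : Set (ℕ × ℕ)} {E : Set Word} {a b : ℕ}
    (hE : ∀ w ∈ E, ∃ g : Perm', g a ≠ b ∧ ∀ s n m, wordRel s w n m ↔ (n, g m) ∈ s) :
    ZLe (insert (a, b) s) E s E := by
  refine ⟨subset_insert _ _, subset_rfl, fun w hw => ?_⟩
  obtain ⟨g, hab, hg⟩ := hE w hw
  exact wordFix_insert_of_wordRel_iff hg hab

lemma List.IsPrefix.getD_eq {α : Type*} {l₁ l₂ : List α} (h : l₁ <+: l₂) {k : ℕ}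
    (hk : k < l₁.length) (d : α) : l₂.getD k d = l₁.getD k d := by
  rw [List.getD_eq_getElem _ _ hk, List.getD_eq_getElem _ _ (hk.trans_le h.length_le)]
  exact (h.getElem hk).symm

lemma TreePos.exists_extension_avoiding {P P₀ : Set Perm'} {T : Set (List ℕ)}
    (hT : TreePos P T) (hP₀ : P₀ ⊆ P) (hP₀fin : P₀.Finite) {t : List ℕ} (ht : t ∈ T) (M : ℕ) :
    ∃ t' ∈ T, t <+: t' ∧ ∃ K : Finset ℕ, K.card = M ∧
      ∀ k ∈ K, t.length ≤ k ∧ k < t'.length ∧ ∀ f ∈ P₀, t'.getD k 0 ≠ f k := by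
  induction M with
  | zero => exact ⟨t, ht, List.prefix_refl t, ∅, rfl, by simp⟩
  | succ M ih =>
    obtain ⟨t₁, ht₁, htt₁, K, hK, hKt₁⟩ := ih
    obtain ⟨t₂, ht₂, ht₁t₂, k, hk₁, hk₂, hkt₂⟩ := hT.2 t₁ ht₁ P₀ hP₀ hP₀fin
    have hkK : k ∉ K := fun hk => (hKt₁ k hk).2.1.not_ge hk₁
    refine ⟨t₂, ht₂, htt₁.trans ht₁t₂, insert k K, by rw [Finset.card_insert_of_notMem hkK, hK],
      fun j hj => ?_⟩
    rcases Finset.mem_insert.mp hj with rfl | hjK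
    · exact ⟨htt₁.length_le.trans hk₁, hk₂, hkt₂⟩
    · obtain ⟨hj₁, hj₂, hjt₁⟩ := hKt₁ j hjK
      exact ⟨hj₁, hj₂.trans_le ht₁t₂.length_le, by rwa [ht₁t₂.getD_eq hj₂]⟩

lemma List.Nodup.ncard_setOf_getD_mem_le {α : Type*} {l : List α} (hl : l.Nodup) (d : α)
    {A : Set α} (hA : A.Finite) : {k | k < l.length ∧ l.getD k d ∈ A}.ncard ≤ A.ncard := by
  refine ncard_le_ncard_of_injOn (fun k => l.getD k d) (fun k hk => hk.2) ?_ hA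
  rintro i ⟨hi, -⟩ j ⟨hj, -⟩ hij
  simp only [List.getD_eq_getElem _ _ hi, List.getD_eq_getElem _ _ hj] at hij
  exact (hl.getElem_inj_iff).mp hij

theorem statement2_general (G : Subgroup Perm')
    (T : Set (List ℕ)) (hT : TreePos (G : Set Perm') T)
    (t : List ℕ) (ht : t ∈ T) (N : ℕ)
    (s : Set (ℕ × ℕ)) (E₀ : Set Word) (hc : ZCond G s E₀)
    (hE₀ : ∀ w ∈ E₀, IsNiceOne G w) :
    ∃ t' ∈ T, t <+: t' ∧
      N < {k : ℕ | t.length ≤ k ∧ k < t'.length ∧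
        ZCond G (insert (k, t'.getD k 0) s) E₀ ∧
        ZLe (insert (k, t'.getD k 0) s) E₀ s E₀}.ncard := by
  choose! g hgG hg using fun w hw => (hE₀ w hw).exists_wordRel_iff
  obtain ⟨t', ht', htt', K, hK, hKt'⟩ := hT.exists_extension_avoiding
    (image_subset_iff.2 hgG) (hc.2.2.1.image g) ht (N + 1 + 2 * s.ncard)
  refine ⟨t', ht', htt', ?_⟩
  set bad := pdom s ∪ {k | k < t'.length ∧ t'.getD k 0 ∈ pran s}
  have hbad_fin : bad.Finite := (hc.1.image _).union ((finite_Iio _).subset fun k hk => hk.1)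
  have hbad : bad.ncard ≤ 2 * s.ncard :=
    calc bad.ncard ≤ (pdom s).ncard + (pran s).ncard := (ncard_union_le _ _).trans
          (Nat.add_le_add_left ((hT.1.2.2 t' ht').ncard_setOf_getD_mem_le 0 (hc.1.image _)) _)
      _ ≤ 2 * s.ncard := by
          rw [two_mul]
          exact Nat.add_le_add (ncard_image_le hc.1) (ncard_image_le hc.1)
  have hgood : (K : Set ℕ) \ bad ⊆ {k : ℕ | t.length ≤ k ∧ k < t'.length ∧
      ZCond G (insert (k, t'.getD k 0) s) E₀ ∧ ZLe (insert (k, t'.getD k 0) s) E₀ s E₀} := by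
    rintro k ⟨hkK, hk⟩
    obtain ⟨hk₁, hk₂, hkt'⟩ := hKt' k hkK
    exact ⟨hk₁, hk₂, hc.insert (fun h => hk (Or.inl h)) (fun h => hk (Or.inr ⟨hk₂, h⟩)),
      zLe_insert fun w hw => ⟨g w, (hkt' _ (mem_image_of_mem g hw)).symm, hg w hw⟩⟩
  calc N < K.card - bad.ncard := by omega
    _ ≤ ((K : Set ℕ) \ bad).ncard := by rw [← ncard_coe_finset]; exact le_ncard_sdiff _ _ hbad_fin
    _ ≤ _ := ncard_le_ncard hgood ((finite_Iio t'.length).subset fun k hk => hk.2.1)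

/-- Many extensions along a positive tree, for conditions whose word side
consists of nice words with exactly one occurrence of `x` or `x⁻¹`. -/
theorem statement2 (G : Subgroup Perm') (hG : Cofinitary G)
    (T : Set (List ℕ)) (hT : TreePos (G : Set Perm') T)
    (t : List ℕ) (ht : t ∈ T) (N : ℕ)
    (s : Set (ℕ × ℕ)) (E₀ : Set Word) (hc : ZCond G s E₀)
    (hE₀ : ∀ w ∈ E₀, IsNiceOne G w) :
    ∃ t' ∈ T, t <+: t' ∧
      N < {k : ℕ | t.length ≤ k ∧ k < t'.length ∧
        ZCond G (insert (k, t'.getD k 0) s) E₀ ∧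
        ZLe (insert (k, t'.getD k 0) s) E₀ s E₀}.ncard :=
  statement2_general G T hT t ht N s E₀ hc hE₀

end
end
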